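/- arXiv:1705.06138 — 5 statements merged into one kernel-verified Lean document; each statement's English description precedes it below -/
import Mathlib

section
/- Let K ⊂ ℂ be compact and suppose the family {Q^z : z ∈ K} is uniformly non-degenerated on K. Suppose further there are c ≥ 1 and M > 0 such that for every α ∈ 𝓗 ⊕ 𝓗 with ‖α‖ = 1, every z ∈ K and every n ≥ M, c^{-1} ≤ |S_n(α, z)| ≤ c. Then there is c' ≥ 1 such that for all z ∈ K, all n ≥ 1 and every generalised eigenvector u associated with z: c'^{-1}(‖u_0‖² + ‖u_1‖²) ≤ ‖a_{n+N-1}‖(‖u_{n-1}‖² + ‖u_n‖²) ≤ c'(‖u_0‖² + ‖u_1‖²). -/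
open ContinuousLinearMap Filter
open scoped ENNReal NNReal
noncomputable section

variable {H : Type*} [NormedAddCommGroup H] [InnerProductSpace ℂ H] [CompleteSpace H]

/-- The Hilbert space direct sum `𝓗 ⊕ 𝓗`. -/
abbrev H2 (H : Type*) [NormedAddCommGroup H] [InnerProductSpace ℂ H] : Type _ :=
  WithLp 2 (H × H)

/-- The column vector `(x, y)ᵗ` as an element of `𝓗 ⊕ 𝓗`. -/
def pr (x y : H) : H2 H := (WithLp.equiv 2 (H × H)).symm (x, y)

/-- The block operator `[[A, B], [C, D]]` on `𝓗 ⊕ 𝓗`. -/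
def blk (A B C D : H →L[ℂ] H) : H2 H →L[ℂ] H2 H :=
  ((WithLp.prodContinuousLinearEquiv 2 ℂ H H).symm : (H × H) →L[ℂ] H2 H) ∘L
    ((A ∘L ContinuousLinearMap.fst ℂ H H + B ∘L ContinuousLinearMap.snd ℂ H H).prod
      (C ∘L ContinuousLinearMap.fst ℂ H H + D ∘L ContinuousLinearMap.snd ℂ H H)) ∘L
    ((WithLp.prodContinuousLinearEquiv 2 ℂ H H) : H2 H →L[ℂ] (H × H))

/-- The real part `sym X = (X + X^*)/2` of a bounded operator. -/
def sym {E : Type*} [NormedAddCommGroup E] [InnerProductSpace ℂ E] [CompleteSpace E]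
    (X : E →L[ℂ] E) : E →L[ℂ] E :=
  (2 : ℂ)⁻¹ • (X + ContinuousLinearMap.adjoint X)

/-- `X` is strictly positive: `⟨Xv, v⟩ ≥ c‖v‖²` for some `c > 0`. -/
def StrictlyPos {E : Type*} [NormedAddCommGroup E] [InnerProductSpace ℂ E] [CompleteSpace E]
    (X : E →L[ℂ] E) : Prop :=
  ∃ c > (0 : ℝ), ∀ v : E, c * ‖v‖ ^ 2 ≤ (inner ℂ (X v) v : ℂ).re

/-- `X'` is a two-sided bounded inverse of `X`. -/
def Inverts (X X' : H →L[ℂ] H) : Prop := X' ∘L X = 1 ∧ X ∘L X' = 1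

/-- The formal Jacobi matrix `𝒜`: `(𝒜u)₀ = b₀u₀ + a₀u₁`,
`(𝒜u)ₙ = aₙ₋₁^* uₙ₋₁ + bₙ uₙ + aₙ uₙ₊₁` for `n ≥ 1`. -/
def jacobiA (a b : ℕ → H →L[ℂ] H) (u : ℕ → H) : ℕ → H
  | 0 => b 0 (u 0) + a 0 (u 1)
  | n + 1 => adjoint (a n) (u n) + b (n + 1) (u (n + 1)) + a (n + 1) (u (n + 2))

/-- The generalised eigenvector recurrence
`aₙ₋₁^* uₙ₋₁ + bₙ uₙ + aₙ uₙ₊₁ = z uₙ` for all `n ≥ 1`. -/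
def GenEigRec (a b : ℕ → H →L[ℂ] H) (z : ℂ) (u : ℕ → H) : Prop :=
  ∀ n : ℕ, adjoint (a n) (u n) + b (n + 1) (u (n + 1)) + a (n + 1) (u (n + 2)) = z • u (n + 1)

/-- `u` is a generalised eigenvector associated with `z`. -/
def IsGenEig (a b : ℕ → H →L[ℂ] H) (z : ℂ) (u : ℕ → H) : Prop :=
  u ≠ 0 ∧ GenEigRec a b z u

/-- `u` belongs to `ℓ²(ℕ; 𝓗)`. -/
def MemL2 (u : ℕ → H) : Prop := Summable fun n => ‖u n‖ ^ 2

/-- The transfer matrix `Bₙ(z)`; here `a'` is the sequence of inverses `aₙ⁻¹`. -/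
def transfer (a a' b : ℕ → H →L[ℂ] H) (z : ℂ) (n : ℕ) : H2 H →L[ℂ] H2 H :=
  blk 0 1 (-(a' n ∘L adjoint (a (n - 1)))) (a' n ∘L (z • (1 : H →L[ℂ] H) - b n))

/-- `prodD B n k = B (n+k-1) ∘ ⋯ ∘ B n`. -/
def prodD (B : ℕ → (H2 H →L[ℂ] H2 H)) : ℕ → ℕ → (H2 H →L[ℂ] H2 H)
  | _, 0 => 1
  | n, k + 1 => B (n + k) ∘L prodD B n k

/-- `sym (diag(a_{n+N-1}, a_{n+N-1}^*) · E · Xₙ(z))` where `Xₙ(z) = B_{n+N-1}(z)⋯Bₙ(z)`. -/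
def turanOp (a a' b : ℕ → H →L[ℂ] H) (N : ℕ) (z : ℂ) (n : ℕ) : H2 H →L[ℂ] H2 H :=
  sym (blk (a (n + N - 1)) 0 0 (adjoint (a (n + N - 1))) ∘L blk 0 (-1) 1 0 ∘L
    prodD (transfer a a' b z) n N)

/-- The `N`-shifted Turán determinant `Sₙ(α, z)` of a generalised eigenvector `u`. -/
def turanS (a a' b : ℕ → H →L[ℂ] H) (N : ℕ) (z : ℂ) (u : ℕ → H) (n : ℕ) : ℝ :=
  (inner ℂ (turanOp a a' b N z n (pr (u (n - 1)) (u n))) (pr (u (n - 1)) (u n)) : ℂ).re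

/-- The family `{Q^z : z ∈ K}` is uniformly non-degenerated on `K`, where
`Qₙ^z(v) = ‖a_{n+N-1}‖⁻¹ ⟨sym(diag(a_{n+N-1}, a_{n+N-1}^*)·E·Xₙ(z)) v, v⟩`. -/
def UnifNonDeg (a a' b : ℕ → H →L[ℂ] H) (N : ℕ) (K : Set ℂ) : Prop :=
  ∃ c ≥ (1 : ℝ), ∃ M : ℕ, 1 ≤ M ∧ ∀ v : H2 H, ∀ z ∈ K, ∀ n : ℕ, M ≤ n →
    c⁻¹ * ‖v‖ ^ 2 ≤ |‖a (n + N - 1)‖⁻¹ * (inner ℂ (turanOp a a' b N z n v) v : ℂ).re| ∧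
    |‖a (n + N - 1)‖⁻¹ * (inner ℂ (turanOp a a' b N z n v) v : ℂ).re| ≤ c * ‖v‖ ^ 2

/-- The matrix `𝓑ᵢ(z) = [[0, Id], [−Rᵢ, z Tᵢ − Qᵢ]]`. -/
def calB (T Q R : ℕ → H →L[ℂ] H) (z : ℂ) (i : ℕ) : H2 H →L[ℂ] H2 H :=
  blk 0 1 (-(R i)) (z • T i - Q i)

/-- `ℱ(λ) = sym([[0, −C_{N-1}], [C_{N-1}^*, 0]] · 𝓑_{N-1}(λ)⋯𝓑₀(λ))` from Theorem B. -/
def calF (T Q R C : ℕ → H →L[ℂ] H) (N : ℕ) (lam : ℝ) : H2 H →L[ℂ] H2 H :=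
  sym (blk 0 (-(C (N - 1))) (adjoint (C (N - 1))) 0 ∘L prodD (calB T Q R (lam : ℂ)) 0 N)

/-- The quadratic-form operator of the commutator approach (`al` is the sequence `α`):
`sym [[α_{n-1} a_{n-1}^*, −α_{n-1}(λ − bₙ)], [0, αₙ aₙ^*]]`. -/
def commOp (a b al : ℕ → H →L[ℂ] H) (lam : ℝ) (n : ℕ) : H2 H →L[ℂ] H2 H :=
  sym (blk (al (n - 1) ∘L adjoint (a (n - 1)))
    (-(al (n - 1) ∘L ((lam : ℂ) • (1 : H →L[ℂ] H) - b n))) 0 (al n ∘L adjoint (a n)))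

/-- `Sₙ(α, λ)` of the commutator approach. -/
def commS (a b al : ℕ → H →L[ℂ] H) (lam : ℝ) (u : ℕ → H) (n : ℕ) : ℝ :=
  (inner ℂ (commOp a b al lam n (pr (u (n - 1)) (u n))) (pr (u (n - 1)) (u n)) : ℂ).re

/-- `sym [[αₙ aₙ^*, −(λ − bₙ) aₙ₋₁⁻¹ αₙ₋₁ aₙ], [0, aₙ^* aₙ₋₁⁻¹ αₙ₋₁ aₙ]]`;
its normalisation converges to `C(λ)`. -/
def climOp (a a' b al : ℕ → H →L[ℂ] H) (lam : ℝ) (n : ℕ) : H2 H →L[ℂ] H2 H :=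
  sym (blk (al n ∘L adjoint (a n))
    (-((((lam : ℂ) • (1 : H →L[ℂ] H) - b n)) ∘L a' (n - 1) ∘L al (n - 1) ∘L a n))
    0
    (adjoint (a n) ∘L a' (n - 1) ∘L al (n - 1) ∘L a n))

/-- Consecutive pairs `(uₙ, uₙ₊₁)` of the generalised eigenvector with initial data `α`. -/
def genPair (a a' b : ℕ → H →L[ℂ] H) (z : ℂ) (α : H2 H) : ℕ → H × H
  | 0 => (WithLp.equiv 2 (H × H)) α
  | n + 1 =>
      let p := genPair a a' b z α n
      (p.2, a' (n + 1) (z • p.2 - b (n + 1) p.2 - adjoint (a n) p.1))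

/-- The generalised eigenvector with initial data `(u₀, u₁)ᵗ = α`. -/
def genVec (a a' b : ℕ → H →L[ℂ] H) (z : ℂ) (α : H2 H) (n : ℕ) : H :=
  (genPair a a' b z α n).1

/-- Iterated logarithm `log^{(i)}`. -/
def iterLog : ℕ → ℝ → ℝ
  | 0, x => x
  | i + 1, x => Real.log (iterLog i x)

/-- `g_j(x) = ∏_{i=1}^j log^{(i)}(x)`. -/
def gfun (j : ℕ) (x : ℝ) : ℝ := ∏ i ∈ Finset.Icc 1 j, iterLog i x

/-! Past the index `M` where both hypotheses apply, `Sₙ` links the two sides: uniform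
non-degeneracy makes `|Sₙ|` comparable to `‖a_{n+N-1}‖ (‖u_{n-1}‖² + ‖u_n‖²)`, and the
normalised bound on `Sₙ`, rescaled, makes it comparable to `‖u₀‖² + ‖u₁‖²`. The finitely many
indices `n < M` are handled by the recurrence itself: one step forwards or backwards changes
`‖uₙ‖² + ‖uₙ₊₁‖²` by a factor bounded uniformly for `z` in the bounded set `K`, and `‖aₘ‖`
takes only finitely many values there, all positive. -/

def Comparable (c x y : ℝ) : Prop := x ≤ c * y ∧ y ≤ c * x

namespace Comparable

variable {c c' x y w x' y' : ℝ}

theorem refl (hc : 1 ≤ c) (hx : 0 ≤ x) : Comparable c x x :=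
  ⟨le_mul_of_one_le_left hx hc, le_mul_of_one_le_left hx hc⟩

theorem mono (h : Comparable c x y) (hx : 0 ≤ x) (hy : 0 ≤ y) (hc : c ≤ c') :
    Comparable c' x y :=
  ⟨h.1.trans (mul_le_mul_of_nonneg_right hc hy), h.2.trans (mul_le_mul_of_nonneg_right hc hx)⟩

theorem trans (h : Comparable c x y) (h' : Comparable c' y w) (hc : 0 ≤ c) (hc' : 0 ≤ c') :
    Comparable (c * c') x w := by
  constructor
  · calc x ≤ c * y := h.1
      _ ≤ c * (c' * w) := mul_le_mul_of_nonneg_left h'.1 hc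
      _ = c * c' * w := by ring
  · calc w ≤ c' * y := h'.2
      _ ≤ c' * (c * x) := mul_le_mul_of_nonneg_left h.2 hc'
      _ = c * c' * x := by ring

theorem mul (h : Comparable c x y) (h' : Comparable c' x' y') (hx : 0 ≤ x) (hy : 0 ≤ y)
    (hx' : 0 ≤ x') (hy' : 0 ≤ y') (hc : 0 ≤ c) : Comparable (c * c') (x * x') (y * y') :=
  ⟨(mul_le_mul h.1 h'.1 hx' (mul_nonneg hc hy)).trans_eq (by ring),
    (mul_le_mul h.2 h'.2 hy' (mul_nonneg hc hx)).trans_eq (by ring)⟩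

theorem inv_mul_le_and_le_mul (h : Comparable c x y) (hc : 0 < c) :
    c⁻¹ * y ≤ x ∧ x ≤ c * y :=
  ⟨(inv_mul_le_iff₀ hc).2 h.2, h.1⟩

end Comparable

theorem comparable_prod_range_of_forall_succ {p C : ℕ → ℝ} (hp : ∀ k, 0 ≤ p k) (hC : ∀ k, 1 ≤ C k)
    (h : ∀ k, Comparable (C k) (p (k + 1)) (p k)) (n : ℕ) :
    Comparable (∏ i ∈ Finset.range n, C i) (p n) (p 0) := by
  induction n with
  | zero => simpa using Comparable.refl le_rfl (hp 0)
  | succ n ih =>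
    rw [Finset.prod_range_succ, mul_comm]
    exact (h n).trans ih (zero_le_one.trans (hC n))
      (Finset.prod_nonneg fun i _ => zero_le_one.trans (hC i))

theorem norm_pr_sq {E : Type*} [NormedAddCommGroup E] [InnerProductSpace ℂ E] (x y : E) :
    ‖pr x y‖ ^ 2 = ‖x‖ ^ 2 + ‖y‖ ^ 2 :=
  WithLp.prod_norm_sq_eq_of_L2 _

theorem pr_smul {E : Type*} [NormedAddCommGroup E] [InnerProductSpace ℂ E] (c : ℂ) (x y : E) :
    pr (c • x) (c • y) = c • pr x y :=
  rfl

theorem norm_smul_sub_sub_le {E : Type*} [NormedAddCommGroup E] [NormedSpace ℂ E] {z : ℂ}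
    {R : ℝ} (hz : ‖z‖ ≤ R) (B C : E →L[ℂ] E) (v w : E) :
    ‖z • v - B v - C w‖ ≤ (R + ‖B‖ + ‖C‖) * (‖v‖ + ‖w‖) := by
  have hR : 0 ≤ R := (norm_nonneg z).trans hz
  have hzv : ‖z • v‖ ≤ R * ‖v‖ := by
    rw [norm_smul]; exact mul_le_mul_of_nonneg_right hz (norm_nonneg v)
  calc ‖z • v - B v - C w‖ ≤ ‖z • v‖ + ‖B v‖ + ‖C w‖ :=
      (norm_sub_le _ _).trans (add_le_add_left (norm_sub_le _ _) _)
    _ ≤ R * ‖v‖ + ‖B‖ * ‖v‖ + ‖C‖ * ‖w‖ := by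
      gcongr <;> exact ContinuousLinearMap.le_opNorm _ _
    _ ≤ (R + ‖B‖ + ‖C‖) * (‖v‖ + ‖w‖) := by
      nlinarith [mul_nonneg hR (norm_nonneg w), mul_nonneg (norm_nonneg B) (norm_nonneg w),
        mul_nonneg (norm_nonneg C) (norm_nonneg v)]

theorem sq_add_sq_le_of_le_mul_add {x y w κ : ℝ} (hw : 0 ≤ w) (h : w ≤ κ * (x + y)) :
    y ^ 2 + w ^ 2 ≤ (1 + 2 * κ ^ 2) * (x ^ 2 + y ^ 2) := by
  have hw2 : w ^ 2 ≤ κ ^ 2 * (x + y) ^ 2 := by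
    rw [← mul_pow]; exact pow_le_pow_left₀ hw h 2
  nlinarith [sq_nonneg κ, sq_nonneg (x - y), mul_nonneg (sq_nonneg κ) (sq_nonneg (x - y))]

theorem comparable_mul_of_abs_inv_mul {c A P S : ℝ} (hc : 0 < c) (hA : 0 < A)
    (h₁ : c⁻¹ * P ≤ |A⁻¹ * S|) (h₂ : |A⁻¹ * S| ≤ c * P) : Comparable c (A * P) |S| := by
  rw [abs_mul, abs_of_pos (inv_pos.2 hA)] at h₁ h₂
  constructor
  · calc A * P ≤ A * (c * (A⁻¹ * |S|)) :=
          mul_le_mul_of_nonneg_left ((inv_mul_le_iff₀ hc).1 h₁) hA.le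
      _ = c * |S| := by field_simp
  · calc |S| = A * (A⁻¹ * |S|) := by field_simp
      _ ≤ A * (c * P) := mul_le_mul_of_nonneg_left h₂ hA.le
      _ = c * (A * P) := by ring

theorem exists_comparable_one_of_pos {f : ℕ → ℝ} (hf : ∀ m, 0 < f m) (M : ℕ) :
    ∃ c ≥ 1, ∀ m < M, Comparable c (f m) 1 := by
  set c := 1 + ∑ m ∈ Finset.range M, (f m + (f m)⁻¹)
  have hsum : 0 ≤ ∑ m ∈ Finset.range M, (f m + (f m)⁻¹) :=
    Finset.sum_nonneg fun m _ => (add_pos (hf m) (inv_pos.2 (hf m))).le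
  refine ⟨c, le_add_of_nonneg_right hsum, fun m hm => ?_⟩
  have hle : f m + (f m)⁻¹ ≤ c :=
    le_add_of_nonneg_of_le zero_le_one (Finset.single_le_sum (f := fun m => f m + (f m)⁻¹)
      (fun i _ => (add_pos (hf i) (inv_pos.2 (hf i))).le) (Finset.mem_range.2 hm))
  have hfm := hf m
  have hinv := inv_pos.2 hfm
  constructor
  · linarith
  · calc 1 = (f m)⁻¹ * f m := (inv_mul_cancel₀ hfm.ne').symm
      _ ≤ c * f m := mul_le_mul_of_nonneg_right (by linarith) hfm.le

omit [CompleteSpace H] in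
theorem Inverts.apply_apply {X X' : H →L[ℂ] H} (h : Inverts X X') (v : H) : X' (X v) = v :=
  congrArg (· v) h.1

theorem Inverts.adjoint_apply_adjoint_apply {X X' : H →L[ℂ] H} (h : Inverts X X') (v : H) :
    adjoint X' (adjoint X v) = v := by
  rw [← ContinuousLinearMap.comp_apply, ← adjoint_comp, h.2, adjoint_one]; rfl

omit [CompleteSpace H] in
theorem Inverts.norm_pos [Nontrivial H] {X X' : H →L[ℂ] H} (h : Inverts X X') : 0 < ‖X‖ := by
  refine norm_pos_iff.2 fun hX => one_ne_zero (α := H →L[ℂ] H) ?_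
  rw [← h.1, hX, comp_zero]

section GeneralisedEigenvector

variable {a a' b : ℕ → H →L[ℂ] H} {z : ℂ} {u : ℕ → H}

theorem GenEigRec.smul (hu : GenEigRec a b z u) (c : ℂ) : GenEigRec a b z (c • u) := by
  intro n
  simp only [Pi.smul_apply, map_smul, ← smul_add, hu n, smul_comm c z]

theorem GenEigRec.eq_forward (hu : GenEigRec a b z u) {k : ℕ}
    (hinv : Inverts (a (k + 1)) (a' (k + 1))) :
    u (k + 2) = a' (k + 1) (z • u (k + 1) - b (k + 1) (u (k + 1)) - adjoint (a k) (u k)) := by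
  rw [← hu k, show ∀ x y w : H, x + y + w - y - x = w by intros; abel, hinv.apply_apply]

theorem GenEigRec.eq_backward (hu : GenEigRec a b z u) {k : ℕ} (hinv : Inverts (a k) (a' k)) :
    u k = adjoint (a' k) (z • u (k + 1) - b (k + 1) (u (k + 1)) - a (k + 1) (u (k + 2))) := by
  rw [← hu k, show ∀ x y w : H, x + y + w - y - w = x by intros; abel,
    hinv.adjoint_apply_adjoint_apply]

/-- `1 + 2κ²`, where `κ` dominates the operator norms occurring in both the forward and the
backward form of the recurrence at step `k`, for `‖z‖ ≤ R`. -/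
def stepConst (a a' b : ℕ → H →L[ℂ] H) (R : ℝ) (k : ℕ) : ℝ :=
  1 + 2 * ((‖a' k‖ + ‖a' (k + 1)‖) * (R + ‖b (k + 1)‖ + ‖a k‖ + ‖a (k + 1)‖)) ^ 2

omit [CompleteSpace H] in
theorem one_le_stepConst (R : ℝ) (k : ℕ) : 1 ≤ stepConst a a' b R k :=
  le_add_of_nonneg_right (by positivity)

theorem GenEigRec.comparable_succ (hu : GenEigRec a b z u) (hinv : ∀ n, Inverts (a n) (a' n))
    {R : ℝ} (hz : ‖z‖ ≤ R) (k : ℕ) :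
    Comparable (stepConst a a' b R k)
      (‖u (k + 1)‖ ^ 2 + ‖u (k + 2)‖ ^ 2) (‖u k‖ ^ 2 + ‖u (k + 1)‖ ^ 2) := by
  set κ := (‖a' k‖ + ‖a' (k + 1)‖) * (R + ‖b (k + 1)‖ + ‖a k‖ + ‖a (k + 1)‖)
  have forward : ‖u (k + 2)‖ ≤ κ * (‖u k‖ + ‖u (k + 1)‖) := by
    rw [hu.eq_forward (hinv _)]
    refine (le_opNorm _ _).trans ?_
    rw [mul_assoc, add_comm ‖u k‖]
    refine mul_le_mul (le_add_of_nonneg_left (norm_nonneg _)) ?_ (norm_nonneg _) (by positivity)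
    refine (norm_smul_sub_sub_le hz _ _ _ _).trans (mul_le_mul_of_nonneg_right ?_ (by positivity))
    rw [LinearIsometryEquiv.norm_map]
    exact le_add_of_nonneg_right (norm_nonneg _)
  have backward : ‖u k‖ ≤ κ * (‖u (k + 2)‖ + ‖u (k + 1)‖) := by
    rw [hu.eq_backward (hinv _)]
    refine (le_opNorm _ _).trans ?_
    rw [LinearIsometryEquiv.norm_map, mul_assoc, add_comm ‖u (k + 2)‖]
    refine mul_le_mul (le_add_of_nonneg_right (norm_nonneg _)) ?_ (norm_nonneg _) (by positivity)
    refine (norm_smul_sub_sub_le hz _ _ _ _).trans (mul_le_mul_of_nonneg_right ?_ (by positivity))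
    linarith [norm_nonneg (a k)]
  have hC : stepConst a a' b R k = 1 + 2 * κ ^ 2 := rfl
  rw [hC]
  constructor
  · exact sq_add_sq_le_of_le_mul_add (norm_nonneg _) forward
  · linarith [sq_add_sq_le_of_le_mul_add (norm_nonneg _) backward]

theorem GenEigRec.comparable_initial (hu : GenEigRec a b z u) (hinv : ∀ n, Inverts (a n) (a' n))
    {R : ℝ} (hz : ‖z‖ ≤ R) {n M : ℕ} (hn : n ≤ M) :
    Comparable (∏ i ∈ Finset.range M, stepConst a a' b R i)
      (‖u n‖ ^ 2 + ‖u (n + 1)‖ ^ 2) (‖u 0‖ ^ 2 + ‖u 1‖ ^ 2) := by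
  refine (comparable_prod_range_of_forall_succ
    (p := fun k => ‖u k‖ ^ 2 + ‖u (k + 1)‖ ^ 2) (fun k => by positivity) (one_le_stepConst R)
    (hu.comparable_succ hinv hz) n).mono (by positivity) (by positivity) ?_
  exact Finset.prod_le_prod_of_subset_of_one_le (Finset.range_subset_range.2 hn)
    (fun i _ => zero_le_one.trans (one_le_stepConst R i)) (fun i _ _ => one_le_stepConst R i)

theorem GenEigRec.eq_zero_of_pr_eq_zero (hu : GenEigRec a b z u)
    (hinv : ∀ n, Inverts (a n) (a' n)) (h : pr (u 0) (u 1) = 0) : u = 0 := by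
  funext n
  have h' := (hu.comparable_initial hinv le_rfl (le_refl n)).1
  rw [← norm_pr_sq (u 0), h, norm_zero] at h'
  simpa using (show ‖u n‖ ^ 2 ≤ 0 by nlinarith [sq_nonneg ‖u (n + 1)‖])

variable {N : ℕ}

theorem turanS_smul (t : ℝ) (u : ℕ → H) (n : ℕ) :
    turanS a a' b N z ((t : ℂ) • u) n = t ^ 2 * turanS a a' b N z u n := by
  unfold turanS
  rw [Pi.smul_apply, Pi.smul_apply, pr_smul, map_smul, inner_smul_left, inner_smul_right,
    Complex.conj_ofReal, ← mul_assoc, ← Complex.ofReal_mul, Complex.re_ofReal_mul, sq]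

theorem GenEigRec.comparable_abs_turanS {c : ℝ} {M n : ℕ} (hc : 0 < c)
    (hS : ∀ u : ℕ → H, GenEigRec a b z u → ‖pr (u 0) (u 1)‖ = 1 → ∀ n : ℕ, M ≤ n →
      c⁻¹ ≤ |turanS a a' b N z u n| ∧ |turanS a a' b N z u n| ≤ c)
    (hu : GenEigRec a b z u) (hu0 : pr (u 0) (u 1) ≠ 0) (hn : M ≤ n) :
    Comparable c |turanS a a' b N z u n| (‖u 0‖ ^ 2 + ‖u 1‖ ^ 2) := by
  set t := ‖pr (u 0) (u 1)‖
  have ht : 0 < t := norm_pos_iff.2 hu0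
  have hunit : ‖pr ((((t⁻¹ : ℝ) : ℂ) • u) 0) ((((t⁻¹ : ℝ) : ℂ) • u) 1)‖ = 1 := by
    rw [Pi.smul_apply, Pi.smul_apply, pr_smul, norm_smul, Complex.norm_real, Real.norm_eq_abs,
      abs_of_pos (inv_pos.2 ht), inv_mul_cancel₀ ht.ne']
  obtain ⟨h₁, h₂⟩ := hS _ (hu.smul _) hunit n hn
  rw [turanS_smul, abs_mul, abs_of_nonneg (sq_nonneg _), inv_pow] at h₁ h₂
  rw [← norm_pr_sq]
  constructor
  · rwa [inv_mul_le_iff₀ (by positivity), mul_comm] at h₂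
  · rw [le_inv_mul_iff₀ (by positivity), ← div_eq_mul_inv, div_le_iff₀ hc] at h₁
    linarith

end GeneralisedEigenvector

theorem statement5_general (a b a' : ℕ → H →L[ℂ] H)
    (hinv : ∀ n, Inverts (a n) (a' n))
    (N : ℕ) (K : Set ℂ) (hK : IsCompact K)
    (hnd : UnifNonDeg a a' b N K)
    (hS : ∃ c ≥ (1 : ℝ), ∃ M : ℕ, 0 < M ∧
      ∀ z ∈ K, ∀ u : ℕ → H, GenEigRec a b z u → ‖pr (u 0) (u 1)‖ = 1 →
        ∀ n : ℕ, M ≤ n →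
          c⁻¹ ≤ |turanS a a' b N z u n| ∧ |turanS a a' b N z u n| ≤ c) :
    ∃ c' ≥ (1 : ℝ), ∀ z ∈ K, ∀ u : ℕ → H, IsGenEig a b z u → ∀ n : ℕ, 1 ≤ n →
      c'⁻¹ * (‖u 0‖ ^ 2 + ‖u 1‖ ^ 2) ≤ ‖a (n + N - 1)‖ * (‖u (n - 1)‖ ^ 2 + ‖u n‖ ^ 2) ∧
      ‖a (n + N - 1)‖ * (‖u (n - 1)‖ ^ 2 + ‖u n‖ ^ 2) ≤ c' * (‖u 0‖ ^ 2 + ‖u 1‖ ^ 2) := by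
  rcases subsingleton_or_nontrivial H with hH | hH
  · exact ⟨1, le_rfl, fun z _ u hu => absurd (Subsingleton.elim u 0) hu.1⟩
  obtain ⟨c₁, hc₁, M₁, -, hQ⟩ := hnd
  obtain ⟨c₂, hc₂, M₂, -, hS⟩ := hS
  obtain ⟨R, hR⟩ := hK.isBounded.exists_norm_le
  set M := max M₁ M₂
  obtain ⟨Λ, hΛ, ha⟩ := exists_comparable_one_of_pos (fun m => (hinv m).norm_pos) (M + N)
  set D := ∏ i ∈ Finset.range M, stepConst a a' b R i
  have hc : 1 ≤ max (c₁ * c₂) (Λ * D) :=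
    le_max_of_le_left (one_le_mul_of_one_le_of_one_le hc₁ hc₂)
  refine ⟨_, hc, fun z hz u hu n hn => ?_⟩
  refine Comparable.inv_mul_le_and_le_mul ?_ (zero_lt_one.trans_le hc)
  rcases le_or_gt M n with hMn | hnM
  · have hv := hQ (pr (u (n - 1)) (u n)) z hz n (le_of_max_le_left hMn)
    rw [norm_pr_sq] at hv
    have hu0 : pr (u 0) (u 1) ≠ 0 := fun h => hu.1 (hu.2.eq_zero_of_pr_eq_zero hinv h)
    exact ((comparable_mul_of_abs_inv_mul (by linarith) (hinv _).norm_pos hv.1 hv.2).trans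
      (hu.2.comparable_abs_turanS (by linarith) (hS z hz) hu0 (le_of_max_le_right hMn))
      (by linarith) (by linarith)).mono (by positivity) (by positivity) (le_max_left _ _)
  · obtain ⟨k, rfl⟩ : ∃ k, n = k + 1 := ⟨n - 1, by omega⟩
    rw [show k + 1 + N - 1 = k + N by omega, Nat.add_sub_cancel]
    have h := (ha (k + N) (by omega)).mul
      (hu.2.comparable_initial hinv (hR z hz) (by omega : k ≤ M)) (norm_nonneg _) zero_le_one (by positivity) (by positivity) (by linarith)
    rw [one_mul] at h
    exact h.mono (by positivity) (by positivity) (le_max_right _ _)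

/-- Theorem `thm:1`. -/
theorem statement5 (a b a' : ℕ → H →L[ℂ] H)
    (hinv : ∀ n, Inverts (a n) (a' n)) (hb : ∀ n, IsSelfAdjoint (b n))
    (N : ℕ) (hN : 0 < N) (K : Set ℂ) (hK : IsCompact K)
    (hnd : UnifNonDeg a a' b N K)
    (hS : ∃ c ≥ (1 : ℝ), ∃ M : ℕ, 0 < M ∧
      ∀ z ∈ K, ∀ u : ℕ → H, GenEigRec a b z u → ‖pr (u 0) (u 1)‖ = 1 →
        ∀ n : ℕ, M ≤ n →
          c⁻¹ ≤ |turanS a a' b N z u n| ∧ |turanS a a' b N z u n| ≤ c) :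
    ∃ c' ≥ (1 : ℝ), ∀ z ∈ K, ∀ u : ℕ → H, IsGenEig a b z u → ∀ n : ℕ, 1 ≤ n →
      c'⁻¹ * (‖u 0‖ ^ 2 + ‖u 1‖ ^ 2) ≤ ‖a (n + N - 1)‖ * (‖u (n - 1)‖ ^ 2 + ‖u n‖ ^ 2) ∧
      ‖a (n + N - 1)‖ * (‖u (n - 1)‖ ^ 2 + ‖u n‖ ^ 2) ≤ c' * (‖u 0‖ ^ 2 + ‖u 1‖ ^ 2) :=
  statement5_general a b a' hinv N K hK hnd hS
end
end

section
/- Let z ∈ ℂ. If every generalised eigenvector associated with z belongs to ℓ²(ℕ;𝓗), then the map T : u ↦ u_0 is a continuous linear isomorphism from the closed subspace {u ∈ ℓ²(ℕ;𝓗) : 𝒜u = zu} onto 𝓗 (in particular this kernel subspace is isomorphic to 𝓗 as a topological vector space). -/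
open ContinuousLinearMap Filter
open scoped ENNReal NNReal
noncomputable section

variable {H : Type*} [NormedAddCommGroup H] [InnerProductSpace ℂ H] [CompleteSpace H]

/-!
Since every `aₙ` is invertible, the equation `𝒜u = zu` can be solved for `uₙ₊₁` in terms of
`uₙ` and `uₙ₋₁`, so its solutions are exactly `uₙ = Tₙ u₀` for explicit bounded operators `Tₙ`.
By hypothesis each such solution (nonzero or not) lies in `ℓ²`, and the closed graph theorem
makes `u₀ ↦ (Tₙ u₀)ₙ` a bounded operator `𝓗 → ℓ²`, inverse to `u ↦ u₀`.
-/

section lpPi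

variable {𝕜 ι E F : Type*} [NontriviallyNormedField 𝕜]
  [NormedAddCommGroup E] [NormedSpace 𝕜 E] [CompleteSpace E]
  [NormedAddCommGroup F] [NormedSpace 𝕜 F] [CompleteSpace F] {p : ℝ≥0∞} [Fact (1 ≤ p)]

def ContinuousLinearMap.lpPi (L : ι → E →L[𝕜] F) (hL : ∀ v, Memℓp (fun i => L i v) p) :
    E →L[𝕜] lp (fun _ : ι => F) p :=
  ContinuousLinearMap.ofSeqClosedGraph
    (g := { toFun := fun v => ⟨fun i => L i v, hL v⟩
            map_add' := fun v w => lp.ext <| funext fun i => map_add (L i) v w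
            map_smul' := fun c v => lp.ext <| funext fun i => map_smul (L i) c v })
    fun _ x y hu hy => lp.ext <| tendsto_nhds_unique
      ((lp.uniformContinuous_coe.continuous.tendsto y).comp hy)
      (tendsto_pi_nhds.2 fun i => ((L i).continuous.tendsto x).comp hu)

end lpPi

theorem Inverts.apply_inv_apply {E : Type*} [NormedAddCommGroup E] [InnerProductSpace ℂ E]
    {X X' : E →L[ℂ] E} (h : Inverts X X') (w : E) : X (X' w) = w :=
  DFunLike.congr_fun h.2 w

theorem Inverts.inv_apply_apply {E : Type*} [NormedAddCommGroup E] [InnerProductSpace ℂ E]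
    {X X' : E →L[ℂ] E} (h : Inverts X X') (w : E) : X' (X w) = w :=
  DFunLike.congr_fun h.1 w

theorem MemL2.memℓp {E : Type*} [NormedAddCommGroup E] {u : ℕ → E} (hu : MemL2 u) : Memℓp u 2 :=
  memℓp_gen (by simpa [MemL2] using hu)

/-- `solutionOp a a' b z n v` is the `n`-th entry of the solution of `𝒜u = zu` with `u₀ = v`. -/
def solutionOp (a a' b : ℕ → H →L[ℂ] H) (z : ℂ) : ℕ → (H →L[ℂ] H)
  | 0 => 1
  | 1 => a' 0 ∘L (z • (1 : H →L[ℂ] H) - b 0)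
  | n + 2 => a' (n + 1) ∘L ((z • (1 : H →L[ℂ] H) - b (n + 1)) ∘L solutionOp a a' b z (n + 1)
      - adjoint (a n) ∘L solutionOp a a' b z n)

section solutionOp

variable {a a' b : ℕ → H →L[ℂ] H} {z : ℂ}

theorem jacobiA_solutionOp (hinv : ∀ n, Inverts (a n) (a' n)) (v : H) :
    ∀ n, jacobiA a b (fun k => solutionOp a a' b z k v) n = z • solutionOp a a' b z n v
  | 0 => by simp [jacobiA, solutionOp, (hinv 0).apply_inv_apply]
  | n + 1 => by
    simp only [jacobiA, solutionOp, comp_apply, sub_apply, smul_apply, one_apply_eq_self,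
      (hinv (n + 1)).apply_inv_apply]
    abel

theorem genEigRec_solutionOp (hinv : ∀ n, Inverts (a n) (a' n)) (v : H) :
    GenEigRec a b z (fun k => solutionOp a a' b z k v) :=
  fun n => jacobiA_solutionOp hinv v (n + 1)

theorem solutionOp_apply_eq_of_jacobiA (hinv : ∀ n, Inverts (a n) (a' n)) {u : ℕ → H}
    (hu : ∀ n, jacobiA a b u n = z • u n) : ∀ n, solutionOp a a' b z n (u 0) = u n
  | 0 => rfl
  | 1 => by
    rw [← (hinv 0).inv_apply_apply (u 1), eq_sub_of_add_eq' (hu 0)]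
    simp [solutionOp]
  | n + 2 => by
    rw [← (hinv (n + 1)).inv_apply_apply (u (n + 2)), eq_sub_of_add_eq' (hu (n + 1))]
    simp only [solutionOp, comp_apply, sub_apply, smul_apply, one_apply_eq_self, map_sub,
      map_add, map_smul, solutionOp_apply_eq_of_jacobiA hinv hu n,
      solutionOp_apply_eq_of_jacobiA hinv hu (n + 1)]
    abel

theorem memℓp_solutionOp (hinv : ∀ n, Inverts (a n) (a' n))
    (hall : ∀ u : ℕ → H, IsGenEig a b z u → MemL2 u) (v : H) :
    Memℓp (fun n => solutionOp a a' b z n v) 2 := by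
  by_cases h0 : (fun n => solutionOp a a' b z n v) = 0
  · rw [h0]
    exact zero_memℓp
  · exact (hall _ ⟨h0, genEigRec_solutionOp hinv v⟩).memℓp

end solutionOp

theorem statement10_general (a b a' : ℕ → H →L[ℂ] H)
    (hinv : ∀ n, Inverts (a n) (a' n))
    (z : ℂ) (hall : ∀ u : ℕ → H, IsGenEig a b z u → MemL2 u) :
    ∃ S : H →L[ℂ] lp (fun _ : ℕ => H) 2,
      (∀ v : H, ∀ n, jacobiA a b (fun k => S v k) n = z • (S v) n) ∧
      (∀ v : H, (S v) 0 = v) ∧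
      (∀ x : lp (fun _ : ℕ => H) 2,
        (∀ n, jacobiA a b (fun k => x k) n = z • x n) → S (x 0) = x) :=
  ⟨.lpPi (solutionOp a a' b z) (memℓp_solutionOp hinv hall), fun v => jacobiA_solutionOp hinv v,
    fun _ => rfl, fun _ hx => lp.ext <| funext <| solutionOp_apply_eq_of_jacobiA hinv hx⟩

/-- Corollary `cor:4`: if every generalised eigenvector associated with `z`
is in `ℓ²`, then `u ↦ u₀` is a continuous linear isomorphism from
`{u ∈ ℓ² : 𝒜u = zu}` onto `𝓗`; we express this by exhibiting a continuous linear map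
`S : 𝓗 → ℓ²` which is a two-sided inverse of evaluation at `0` on that subspace. -/
theorem statement10 (a b a' : ℕ → H →L[ℂ] H)
    (hinv : ∀ n, Inverts (a n) (a' n)) (hb : ∀ n, IsSelfAdjoint (b n))
    (z : ℂ) (hall : ∀ u : ℕ → H, IsGenEig a b z u → MemL2 u) :
    ∃ S : H →L[ℂ] lp (fun _ : ℕ => H) 2,
      (∀ v : H, ∀ n, jacobiA a b (fun k => S v k) n = z • (S v) n) ∧
      (∀ v : H, (S v) 0 = v) ∧
      (∀ x : lp (fun _ : ℕ => H) 2,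
        (∀ n, jacobiA a b (fun k => x k) n = z • x n) → S (x 0) = x) :=
  statement10_general a b a' hinv z hall
end
end

section
/- Let (α_n : n ≥ 0) be a sequence of bounded operators on 𝓗, λ ∈ ℝ, and let u be the generalised eigenvector associated with λ with (u_0, u_1)ᵗ = α ∈ 𝓗 ⊕ 𝓗. Then for every n ≥ 1, S_n(α, λ) = ⟨sym([[α_n a_n^*, −(λ·Id − b_n) a_{n-1}^{-1} α_{n-1} a_n], [0, a_n^* a_{n-1}^{-1} α_{n-1} a_n]])·(u_n, u_{n+1})ᵗ, (u_n, u_{n+1})ᵗ⟩. -/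
open ContinuousLinearMap Filter
open scoped ENNReal NNReal
noncomputable section

variable {H : Type*} [NormedAddCommGroup H] [InnerProductSpace ℂ H] [CompleteSpace H]

/-! Taking `sym` does not change the real part of a quadratic form, so both sides are forms of
upper-triangular block operators, and they share the term `⟪αₙ aₙ^* uₙ, uₙ⟫`. The two remaining
terms on each side are identified through the recurrence
`aₙ₋₁^* uₙ₋₁ = (λ - bₙ) uₙ - aₙ uₙ₊₁`. -/

omit [CompleteSpace H] in
lemma blk_pr (A B C D : H →L[ℂ] H) (x y : H) :
    blk A B C D (pr x y) = pr (A x + B y) (C x + D y) := rfl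

omit [CompleteSpace H] in
lemma inner_pr_pr (x y x' y' : H) :
    (inner ℂ (pr x y) (pr x' y') : ℂ) = inner ℂ x x' + inner ℂ y y' := by
  simp [pr, WithLp.prod_inner_apply]

omit [CompleteSpace H] in
lemma inner_upperTriangular_blk_pr (A B D : H →L[ℂ] H) (x y : H) :
    (inner ℂ (blk A B 0 D (pr x y)) (pr x y) : ℂ) =
      inner ℂ (A x) x + inner ℂ (B y) x + inner ℂ (D y) y := by
  rw [blk_pr, inner_pr_pr, zero_apply, zero_add, inner_add_left]

lemma re_inner_sym_apply_self {E : Type*} [NormedAddCommGroup E] [InnerProductSpace ℂ E]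
    [CompleteSpace E] (X : E →L[ℂ] E) (v : E) :
    (inner ℂ (sym X v) v : ℂ).re = (inner ℂ (X v) v : ℂ).re := by
  rw [sym, smul_apply, add_apply, inner_smul_left, inner_add_left, adjoint_inner_left,
    ← inner_conj_symm v (X v), Complex.add_conj]
  simp

lemma isSelfAdjoint_ofReal_smul_one_sub {b : H →L[ℂ] H} (hb : IsSelfAdjoint b) (lam : ℝ) :
    IsSelfAdjoint ((lam : ℂ) • (1 : H →L[ℂ] H) - b) :=
  (IsSelfAdjoint.smul (Complex.conj_ofReal lam) (.one _)).sub hb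

lemma GenEigRec.adjoint_apply_eq {a b : ℕ → H →L[ℂ] H} {z : ℂ} {u : ℕ → H}
    (hu : GenEigRec a b z u) (m : ℕ) :
    adjoint (a m) (u m) =
      (z • (1 : H →L[ℂ] H) - b (m + 1)) (u (m + 1)) - a (m + 1) (u (m + 2)) := by
  rw [sub_apply, smul_apply, one_apply_eq_self, ← hu m]
  abel

/- Both sides equal `-⟪α₀ a₁ z, x⟫`: on the left substitute the recurrence
`a₀^* x = L y - a₁ z` directly; on the right move `L` and `a₁^*` across the inner product,
recognise `L y - a₁ z = a₀^* x`, and cancel `a₀ a₀' = 1`. -/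
lemma inner_shift_of_adjoint_apply_eq {a₀ a₀' a₁ α₀ L : H →L[ℂ] H} {x y z : H}
    (hright : a₀ ∘L a₀' = 1) (hL : IsSelfAdjoint L) (hrec : adjoint a₀ x = L y - a₁ z) :
    (inner ℂ (α₀ (adjoint a₀ x)) x : ℂ) - inner ℂ (α₀ (L y)) x =
      -inner ℂ (L (a₀' (α₀ (a₁ z)))) y + inner ℂ (adjoint a₁ (a₀' (α₀ (a₁ z)))) z := by
  set w := a₀' (α₀ (a₁ z))
  have hw : a₀ w = α₀ (a₁ z) := by rw [← comp_apply, hright, one_apply_eq_self]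
  have hLw : (inner ℂ (L w) y : ℂ) = inner ℂ w (L y) := by
    rw [← adjoint_inner_right, hL.adjoint_eq]
  calc (inner ℂ (α₀ (adjoint a₀ x)) x : ℂ) - inner ℂ (α₀ (L y)) x
      = -inner ℂ (a₀ w) x := by rw [hrec, hw, map_sub, inner_sub_left]; ring
    _ = -inner ℂ w (L y - a₁ z) := by rw [← hrec, adjoint_inner_right]
    _ = -inner ℂ (L w) y + inner ℂ (adjoint a₁ w) z := by
      rw [hLw, adjoint_inner_left, inner_sub_right]; ring

theorem statement12_general (a b a' al : ℕ → H →L[ℂ] H)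
    (hinv : ∀ n, Inverts (a n) (a' n)) (hb : ∀ n, IsSelfAdjoint (b n))
    (lam : ℝ) (u : ℕ → H)
    (hu : GenEigRec a b (lam : ℂ) u) :
    ∀ n : ℕ, 1 ≤ n →
      commS a b al lam u n =
        (inner ℂ (climOp a a' b al lam n (pr (u n) (u (n + 1))))
          (pr (u n) (u (n + 1))) : ℂ).re := by
  intro n hn
  obtain ⟨m, rfl⟩ : ∃ m, n = m + 1 := ⟨n - 1, (Nat.sub_add_cancel hn).symm⟩
  have hshift := inner_shift_of_adjoint_apply_eq (α₀ := al m) (hinv m).2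
    (isSelfAdjoint_ofReal_smul_one_sub (hb (m + 1)) lam) (hu.adjoint_apply_eq m)
  rw [commS, commOp, climOp, re_inner_sym_apply_self, re_inner_sym_apply_self,
    inner_upperTriangular_blk_pr, inner_upperTriangular_blk_pr]
  simp only [Nat.add_sub_cancel, comp_apply, neg_apply, inner_neg_left] at hshift ⊢
  congr 1
  linear_combination hshift

/-- Proposition `prop:4`. -/
theorem statement12 (a b a' al : ℕ → H →L[ℂ] H)
    (hinv : ∀ n, Inverts (a n) (a' n)) (hb : ∀ n, IsSelfAdjoint (b n))
    (lam : ℝ) (α : H2 H) (u : ℕ → H)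
    (hu : GenEigRec a b (lam : ℂ) u) (hα : pr (u 0) (u 1) = α) :
    ∀ n : ℕ, 1 ≤ n →
      commS a b al lam u n =
        (inner ℂ (climOp a a' b al lam n (pr (u n) (u (n + 1))))
          (pr (u n) (u (n + 1))) : ℂ).re :=
  statement12_general a b a' al hinv hb lam u hu
end
end

section
/- Let (α_n : n ≥ 0) be a sequence of bounded operators on 𝓗, let λ ∈ ℝ, and let u be the generalised eigenvector associated with λ with (u_0, u_1)ᵗ = α ∈ 𝓗 ⊕ 𝓗. Then for every n ≥ 1: (S_{n+1}(α, λ) − S_n(α, λ))^- ≤ (‖(sym(α_{n+1} a_{n+1}^* − a_n^* a_{n-1}^{-1} α_{n-1} a_n))^-‖ + |λ|·‖a_{n-1}^{-1} α_{n-1} a_n − α_n‖ + ‖α_n b_{n+1} − b_n a_{n-1}^{-1} α_{n-1} a_n‖)·(‖u_n‖² + ‖u_{n+1}‖²). -/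
open ContinuousLinearMap Filter
open scoped ENNReal NNReal
noncomputable section

variable {H : Type*} [NormedAddCommGroup H] [InnerProductSpace ℂ H] [CompleteSpace H]

/-! The recurrence at `n` reads `aₙ₋₁^* uₙ₋₁ = (λ - bₙ) uₙ - aₙ uₙ₊₁`; through `aₙ₋₁⁻¹` this
eliminates `uₙ₋₁` from `Sₙ`. Then `Sₙ₊₁ - Sₙ` is the quadratic form of `sym Eₙ` at `uₙ₊₁` plus the
cross term `Re⟨(λ Tₙ + Qₙ) uₙ₊₁, uₙ⟩`, where `Eₙ, Tₙ, Qₙ` are the three operators of the bound; the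
first is at least `-‖(sym Eₙ)⁻‖ ‖uₙ₊₁‖²`, the second at least `-‖λ Tₙ + Qₙ‖ ‖uₙ‖ ‖uₙ₊₁‖`. -/

open scoped InnerProductSpace

section

variable {E : Type*} [NormedAddCommGroup E] [InnerProductSpace ℂ E]

lemma inner_blk_pr (A B C D : E →L[ℂ] E) (x y x' y' : E) :
    ⟪blk A B C D (pr x y), pr x' y'⟫_ℂ = ⟪A x + B y, x'⟫_ℂ + ⟪C x + D y, y'⟫_ℂ := rfl

variable [CompleteSpace E]

lemma re_inner_sym_apply (X : E →L[ℂ] E) (v : E) : (⟪sym X v, v⟫_ℂ).re = (⟪X v, v⟫_ℂ).re := by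
  simp only [sym, smul_apply, inner_smul_left, add_apply, inner_add_left, adjoint_inner_left]
  rw [← inner_conj_symm v (X v), Complex.add_conj]
  simp [map_ofNat]

lemma isSelfAdjoint_sym (X : E →L[ℂ] E) : IsSelfAdjoint (sym X) := by
  rw [isSelfAdjoint_iff', sym, map_smulₛₗ, map_add, adjoint_adjoint]
  simp [add_comm, map_ofNat]

lemma IsSelfAdjoint.neg_norm_negPart_mul_sq_le {A : E →L[ℂ] E} (hA : IsSelfAdjoint A) (v : E) :
    -(‖A⁻‖ * ‖v‖ ^ 2) ≤ (⟪A v, v⟫_ℂ).re := by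
  have hpos : 0 ≤ (⟪A⁺ v, v⟫_ℂ).re :=
    (A⁺).nonneg_iff_isPositive.mp (CFC.posPart_nonneg A) |>.re_inner_nonneg_left v
  have hneg : (⟪A⁻ v, v⟫_ℂ).re ≤ ‖A⁻‖ * ‖v‖ ^ 2 :=
    calc (⟪A⁻ v, v⟫_ℂ).re ≤ ‖A⁻ v‖ * ‖v‖ := re_inner_le_norm (𝕜 := ℂ) _ _
      _ ≤ ‖A⁻‖ * ‖v‖ * ‖v‖ := by gcongr; exact (A⁻).le_opNorm v
      _ = ‖A⁻‖ * ‖v‖ ^ 2 := by ring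
  have hsplit : (⟪A v, v⟫_ℂ).re = (⟪A⁺ v, v⟫_ℂ).re - (⟪A⁻ v, v⟫_ℂ).re := by
    conv_lhs => rw [← CFC.posPart_sub_negPart A hA]
    simp
  linarith

lemma inner_adjoint_sub_inner_eq (P A A' L C : E →L[ℂ] E) (hA : A ∘L A' = 1)
    (hL : IsSelfAdjoint L) {w x y : E} (h : adjoint A w = L x - C y) :
    ⟪P (adjoint A w), w⟫_ℂ - ⟪P (L x), w⟫_ℂ =
      ⟪(adjoint C ∘L A' ∘L P ∘L C) y, y⟫_ℂ - ⟪(L ∘L A' ∘L P ∘L C) y, x⟫_ℂ := by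
  have hw : w = adjoint A' (adjoint A w) := by
    rw [← comp_apply, ← adjoint_comp, hA, one_def, adjoint_id, id_apply]
  calc ⟪P (adjoint A w), w⟫_ℂ - ⟪P (L x), w⟫_ℂ = -⟪P (C y), w⟫_ℂ := by
        rw [h, map_sub, inner_sub_left]; ring
    _ = -⟪A' (P (C y)), adjoint A w⟫_ℂ := by
        conv_lhs => rw [hw, adjoint_inner_right]
    _ = _ := by
        rw [h, inner_sub_right]
        simp only [comp_apply, adjoint_inner_left]
        rw [← adjoint_inner_right L, hL.adjoint_eq]
        ring

lemma neg_le_re_inner_add_re_inner (X B : E →L[ℂ] E) (x y : E) :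
    -((‖(sym X)⁻‖ + ‖B‖) * (‖x‖ ^ 2 + ‖y‖ ^ 2)) ≤ (⟪B y, x⟫_ℂ).re + (⟪X y, y⟫_ℂ).re := by
  have hX := (isSelfAdjoint_sym X).neg_norm_negPart_mul_sq_le y
  rw [re_inner_sym_apply] at hX
  have hB : -(‖B‖ * ‖y‖ * ‖x‖) ≤ (⟪B y, x⟫_ℂ).re :=
    calc -(‖B‖ * ‖y‖ * ‖x‖) ≤ -‖⟪B y, x⟫_ℂ‖ := by
          rw [neg_le_neg_iff]
          exact (norm_inner_le_norm _ _).trans (by gcongr; exact B.le_opNorm y)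
      _ ≤ (⟪B y, x⟫_ℂ).re := neg_le_of_abs_le (Complex.abs_re_le_norm _)
  have hxy : ‖y‖ * ‖x‖ ≤ ‖x‖ ^ 2 + ‖y‖ ^ 2 := by nlinarith [sq_nonneg (‖x‖ - ‖y‖)]
  nlinarith [norm_nonneg B, norm_nonneg (sym X)⁻, sq_nonneg ‖x‖]

end

lemma commS_succ (a b al : ℕ → H →L[ℂ] H) (lam : ℝ) (u : ℕ → H) (n : ℕ) :
    commS a b al lam u (n + 1) =
      (⟪al n (adjoint (a n) (u n)), u n⟫_ℂ
        - ⟪al n (((lam : ℂ) • (1 : H →L[ℂ] H) - b (n + 1)) (u (n + 1))), u n⟫_ℂ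
        + ⟪al (n + 1) (adjoint (a (n + 1)) (u (n + 1))), u (n + 1)⟫_ℂ).re := by
  rw [commS, commOp, re_inner_sym_apply, Nat.add_sub_cancel, inner_blk_pr]
  simp only [comp_apply, neg_apply, zero_apply, zero_add, ← sub_eq_add_neg, inner_sub_left]

lemma commS_succ_succ_sub_commS_succ (a b a' al : ℕ → H →L[ℂ] H) (lam : ℝ) (u : ℕ → H) (m : ℕ)
    (hrec : adjoint (a m) (u m) + b (m + 1) (u (m + 1)) + a (m + 1) (u (m + 1 + 1))
      = (lam : ℂ) • u (m + 1))
    (ha : a m ∘L a' m = 1) (hb : IsSelfAdjoint (b (m + 1))) :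
    commS a b al lam u (m + 1 + 1) - commS a b al lam u (m + 1) =
      (⟪((lam : ℂ) • (a' m ∘L al m ∘L a (m + 1) - al (m + 1))
          + (al (m + 1) ∘L b (m + 1 + 1) - b (m + 1) ∘L a' m ∘L al m ∘L a (m + 1)))
          (u (m + 1 + 1)), u (m + 1)⟫_ℂ).re
      + (⟪(al (m + 1 + 1) ∘L adjoint (a (m + 1 + 1))
          - adjoint (a (m + 1)) ∘L a' m ∘L al m ∘L a (m + 1))
          (u (m + 1 + 1)), u (m + 1 + 1)⟫_ℂ).re := by
  set L : H →L[ℂ] H := (lam : ℂ) • 1 - b (m + 1)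
  have hL : IsSelfAdjoint L :=
    ((show IsSelfAdjoint (lam : ℂ) from Complex.conj_ofReal lam).smul (.one _)).sub hb
  have hprev : adjoint (a m) (u m) = L (u (m + 1)) - a (m + 1) (u (m + 1 + 1)) := by
    simp only [L, sub_apply, smul_apply, one_apply_eq_self, ← hrec]
    abel
  rw [commS_succ, commS_succ,
    inner_adjoint_sub_inner_eq (al m) (a m) (a' m) L (a (m + 1)) ha hL hprev,
    ← Complex.sub_re, ← Complex.add_re]
  congr 1
  simp only [L, add_apply, sub_apply, smul_apply, one_apply_eq_self, comp_apply, map_sub, map_smul,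
    inner_add_left, inner_sub_left, inner_smul_left]
  ring

theorem statement15_general (a b a' al : ℕ → H →L[ℂ] H)
    (hinv : ∀ n, Inverts (a n) (a' n)) (hb : ∀ n, IsSelfAdjoint (b n))
    (lam : ℝ) (u : ℕ → H)
    (hu : GenEigRec a b (lam : ℂ) u) :
    ∀ n : ℕ, 1 ≤ n →
      max 0 (-(commS a b al lam u (n + 1) - commS a b al lam u n)) ≤
        (‖(sym (al (n + 1) ∘L adjoint (a (n + 1))
              - adjoint (a n) ∘L a' (n - 1) ∘L al (n - 1) ∘L a n))⁻‖
          + |lam| * ‖a' (n - 1) ∘L al (n - 1) ∘L a n - al n‖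
          + ‖al n ∘L b (n + 1) - b n ∘L a' (n - 1) ∘L al (n - 1) ∘L a n‖)
        * (‖u n‖ ^ 2 + ‖u (n + 1)‖ ^ 2) := by
  intro n hn
  obtain ⟨m, rfl⟩ := Nat.exists_eq_add_of_le' hn
  rw [Nat.add_sub_cancel,
    commS_succ_succ_sub_commS_succ a b a' al lam u m (hu m) (hinv m).2 (hb _)]
  set D := al (m + 1 + 1) ∘L adjoint (a (m + 1 + 1))
    - adjoint (a (m + 1)) ∘L a' m ∘L al m ∘L a (m + 1)
  set T := a' m ∘L al m ∘L a (m + 1) - al (m + 1)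
  set Q := al (m + 1) ∘L b (m + 1 + 1) - b (m + 1) ∘L a' m ∘L al m ∘L a (m + 1)
  have hnorm : ‖(lam : ℂ) • T + Q‖ ≤ |lam| * ‖T‖ + ‖Q‖ := by
    grw [norm_add_le, norm_smul, Complex.norm_real, Real.norm_eq_abs]
  have hlower := neg_le_re_inner_add_re_inner D ((lam : ℂ) • T + Q) (u (m + 1)) (u (m + 1 + 1))
  have hs : 0 ≤ ‖u (m + 1)‖ ^ 2 + ‖u (m + 1 + 1)‖ ^ 2 := by positivity
  refine max_le (by positivity) ?_
  linarith [mul_le_mul_of_nonneg_right hnorm hs]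

/-- Lemma `lem:2`. -/
theorem statement15 (a b a' al : ℕ → H →L[ℂ] H)
    (hinv : ∀ n, Inverts (a n) (a' n)) (hb : ∀ n, IsSelfAdjoint (b n))
    (lam : ℝ) (α : H2 H) (u : ℕ → H)
    (hu : GenEigRec a b (lam : ℂ) u) (hα : pr (u 0) (u 1) = α) :
    ∀ n : ℕ, 1 ≤ n →
      max 0 (-(commS a b al lam u (n + 1) - commS a b al lam u n)) ≤
        (‖(sym (al (n + 1) ∘L adjoint (a (n + 1))
              - adjoint (a n) ∘L a' (n - 1) ∘L al (n - 1) ∘L a n))⁻‖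
          + |lam| * ‖a' (n - 1) ∘L al (n - 1) ∘L a n - al n‖
          + ‖al n ∘L b (n + 1) - b n ∘L a' (n - 1) ∘L al (n - 1) ∘L a n‖)
        * (‖u n‖ ^ 2 + ‖u (n + 1)‖ ^ 2) :=
  statement15_general a b a' al hinv hb lam u hu
end
end

section
/- Let N ≥ 1 be an integer. Assume: (a) lim_{n→∞} ‖a_n^{-1} − T_n‖ = 0; (b) lim_{n→∞} ‖a_n^{-1} b_n − Q_n‖ = 0; (c) lim_{n→∞} ‖a_n^{-1} a_{n-1}^* − R_n‖ = 0; (d) lim_{n→∞} ‖a_n/‖a_n‖ − C_n‖ = 0, for N-periodic sequences (T_n), (Q_n), (R_n), (C_n) of bounded operators on 𝓗 with every R_n and C_n invertible. Then: (i) for every compact set K ⊂ ℂ, sup_{n ≥ 1} sup_{z ∈ K} ‖X_n(z)‖ < ∞; and (ii) lim_{n→∞} ‖diag(a_{n+N-1}/‖a_{n+N-1}‖, a_{n+N-1}^*/‖a_{n+N-1}‖)·E·X_n(z) − ℱ^n(z)‖ = 0 uniformly on compact subsets of ℂ, where ℱ^n(z) = diag(C_{n+N-1}, C_{n+N-1}^*)·E·𝓑_{n+N-1}(z)·𝓑_{n+N-2}(z)⋯𝓑_n(z)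 and 𝓑_k(z) = [[0, Id],[−R_k, z·T_k − Q_k]]. -/
open ContinuousLinearMap Filter
open scoped ENNReal NNReal
noncomputable section

variable {H : Type*} [NormedAddCommGroup H] [InnerProductSpace ℂ H] [CompleteSpace H]

/-!
The transfer matrix `B_n(z)` is `𝓑_n(z)` built from `a_n⁻¹`, `a_n⁻¹ b_n` and `a_n⁻¹ a_{n-1}^*`,
so (a)–(c) say that `B_n(z) - 𝓑_n(z) → 0` uniformly for `z` in a compact set `K`, while periodicity
makes the `𝓑_n(z)` uniformly bounded there. Telescoping the product of `N` factors gives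
`X_n(z) - 𝓑_{n+N-1}(z)⋯𝓑_n(z) → 0` uniformly, hence (i) for large `n`; each of the finitely many
remaining `n` is bounded on `K` by itself. For (ii), with `F` the normalised diagonal factor (of
norm at most one) and `G = diag(C_{n+N-1}, C_{n+N-1}^*)`, write
`F E X - G E Y = F E (X - Y) + (F - G) E Y` and use (d).

Uniformity in `z ∈ K` is encoded as `=O[l] 1` / `=o[l] 1` along `l = atTop ×ˢ 𝓟 K` on `ℕ × ℂ`.
-/

open Asymptotics Bornology Set Topology

set_option linter.unusedSectionVars false

section Bounds

variable {α β : Type*} {l : Filter α}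

lemma Function.Periodic.finite_range_nat {f : ℕ → β} {N : ℕ} (hf : Function.Periodic f N)
    (hN : 0 < N) : (range f).Finite :=
  ((finite_Iio N).image f).subset <| by
    rintro _ ⟨n, rfl⟩
    exact ⟨n % N, Nat.mod_lt n hN, hf.map_mod_nat n⟩

lemma isBigO_one_comp_of_isBounded_range {E : Type*} [SeminormedAddCommGroup E] {f : β → E}
    (hf : IsBounded (range f)) (μ : α → β) : (fun x => f (μ x)) =O[l] fun _ => (1 : ℝ) := by
  obtain ⟨c, hc⟩ := hf.exists_norm_le
  exact IsBigO.of_bound c (Eventually.of_forall fun x => by simpa using hc _ (mem_range_self _))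

lemma isLittleO_one_comp_of_tendsto_norm {E : Type*} [SeminormedAddCommGroup E] {f : ℕ → E}
    {μ : α → ℕ} (hf : Tendsto (fun n => ‖f n‖) atTop (𝓝 0)) (hμ : Tendsto μ l atTop) :
    (fun x => f (μ x)) =o[l] fun _ => (1 : ℝ) :=
  (isLittleO_one_iff ℝ).2 ((tendsto_zero_iff_norm_tendsto_zero.2 hf).comp hμ)

lemma isBigO_id_principal {E : Type*} [SeminormedAddCommGroup E] {s : Set E}
    (hs : IsBounded s) : (fun z : E => z) =O[𝓟 s] fun _ => (1 : ℝ) := by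
  obtain ⟨c, hc⟩ := hs.exists_norm_le
  exact IsBigO.of_bound c (eventually_principal.2 fun z hz => by simpa using hc z hz)

lemma exists_bound_of_isBigO_atTop_prod_principal {E : Type*} [SeminormedAddCommGroup E]
    {f : ℕ → β → E} {s : Set β}
    (h : (fun p : ℕ × β => f p.1 p.2) =O[atTop ×ˢ 𝓟 s] fun _ => (1 : ℝ))
    (hn : ∀ n, f n =O[𝓟 s] fun _ => (1 : ℝ)) : ∃ c, ∀ n, ∀ y ∈ s, ‖f n y‖ ≤ c := by
  obtain ⟨c, hc⟩ := ((isBigO_one_iff ℝ).1 h).eventually_le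
  obtain ⟨M, hM⟩ := eventually_atTop.1 (eventually_prod_principal_iff.1 hc)
  choose d hd using fun n => ((isBigO_one_iff ℝ).1 (hn n)).eventually_le
  obtain ⟨D, hD⟩ := ((Finset.range M).image d).exists_le
  refine ⟨max c D, fun n y hy => ?_⟩
  rcases lt_or_ge n M with hnM | hnM
  · exact (eventually_principal.1 (hd n) y hy).trans
      ((hD _ (Finset.mem_image_of_mem d (Finset.mem_range.2 hnM))).trans (le_max_right _ _))
  · exact (hM n hnM y hy).trans (le_max_left _ _)

lemma Asymptotics.IsBigO.mul_mul_sub_mul_mul {R : Type*} [NormedRing R] {F G X Y : α → R} (E : R)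
    (hF : F =O[l] fun _ => (1 : ℝ)) (hFG : (fun x => F x - G x) =o[l] fun _ => (1 : ℝ))
    (hY : Y =O[l] fun _ => (1 : ℝ)) (hXY : (fun x => X x - Y x) =o[l] fun _ => (1 : ℝ)) :
    (fun x => F x * (E * X x) - G x * (E * Y x)) =o[l] fun _ => (1 : ℝ) := by
  have hE := isBigO_const_one ℝ E l
  have h := (hF.mul_isLittleO (hE.mul_isLittleO hXY)).add (hFG.mul_isBigO (hE.mul hY))
  simp only [mul_one] at h
  refine h.congr_left fun x => ?_
  noncomm_ring

end Bounds

section Blocks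

lemma blk_apply (A B C D : H →L[ℂ] H) (v : H2 H) :
    blk A B C D v = pr (A v.fst + B v.snd) (C v.fst + D v.snd) := rfl

lemma blk_sub (A B C D A' B' C' D' : H →L[ℂ] H) :
    blk A B C D - blk A' B' C' D' = blk (A - A') (B - B') (C - C') (D - D') := by
  ext v
  simp only [sub_apply, blk_apply, pr, WithLp.equiv_symm_apply, ← WithLp.toLp_sub, Prod.mk_sub_mk]
  congr 2 <;> abel

lemma norm_pr_le (x y : H) : ‖pr x y‖ ≤ ‖x‖ + ‖y‖ := by
  have h : ‖pr x y‖ ^ 2 = ‖x‖ ^ 2 + ‖y‖ ^ 2 := WithLp.prod_norm_sq_eq_of_L2 _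
  nlinarith [norm_nonneg (pr x y), norm_nonneg x, norm_nonneg y]

lemma norm_blk_le (A B C D : H →L[ℂ] H) : ‖blk A B C D‖ ≤ ‖A‖ + ‖B‖ + ‖C‖ + ‖D‖ := by
  refine opNorm_le_bound _ (by positivity) fun v => ?_
  calc ‖blk A B C D v‖ ≤ ‖A v.fst + B v.snd‖ + ‖C v.fst + D v.snd‖ := norm_pr_le _ _
    _ ≤ (‖A‖ * ‖v.fst‖ + ‖B‖ * ‖v.snd‖) + (‖C‖ * ‖v.fst‖ + ‖D‖ * ‖v.snd‖) := by
        gcongr <;> exact (norm_add_le _ _).trans (by gcongr <;> exact le_opNorm _ _)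
    _ ≤ (‖A‖ * ‖v‖ + ‖B‖ * ‖v‖) + (‖C‖ * ‖v‖ + ‖D‖ * ‖v‖) := by
        gcongr <;> first | exact WithLp.norm_fst_le _ v | exact WithLp.norm_snd_le _ v
    _ = (‖A‖ + ‖B‖ + ‖C‖ + ‖D‖) * ‖v‖ := by ring

variable {α : Type*} {l : Filter α} {g : α → ℝ} {A B C D : α → H →L[ℂ] H}

lemma isBigO_blk_norm_sum :
    (fun x => blk (A x) (B x) (C x) (D x)) =O[l] fun x => ‖A x‖ + ‖B x‖ + ‖C x‖ + ‖D x‖ :=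
  isBigO_of_le l fun _ => (norm_blk_le _ _ _ _).trans (Real.le_norm_self _)

lemma isBigO_blk (hA : A =O[l] g) (hB : B =O[l] g) (hC : C =O[l] g) (hD : D =O[l] g) :
    (fun x => blk (A x) (B x) (C x) (D x)) =O[l] g :=
  isBigO_blk_norm_sum.trans (((hA.norm_left.add hB.norm_left).add hC.norm_left).add hD.norm_left)

lemma isLittleO_blk (hA : A =o[l] g) (hB : B =o[l] g) (hC : C =o[l] g) (hD : D =o[l] g) :
    (fun x => blk (A x) (B x) (C x) (D x)) =o[l] g :=
  isBigO_blk_norm_sum.trans_isLittleO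
    (((hA.norm_left.add hB.norm_left).add hC.norm_left).add hD.norm_left)

end Blocks

section Products

variable {α : Type*} {l : Filter α} {ν : α → ℕ} {B B' : α → ℕ → H2 H →L[ℂ] H2 H}

lemma isBigO_prodD (k : ℕ)
    (hB : ∀ j < k, (fun x => B x (ν x + j)) =O[l] fun _ => (1 : ℝ)) :
    (fun x => prodD (B x) (ν x) k) =O[l] fun _ => (1 : ℝ) := by
  induction k with
  | zero => exact isBigO_const_one _ _ _
  | succ k ih =>
    have h := (hB k k.lt_succ_self).mul (ih fun j hj => hB j (hj.trans k.lt_succ_self))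
    simp only [mul_one] at h
    exact h

lemma isLittleO_prodD_sub (k : ℕ)
    (hB' : ∀ j < k, (fun x => B' x (ν x + j)) =O[l] fun _ => (1 : ℝ))
    (hB : ∀ j < k, (fun x => B x (ν x + j) - B' x (ν x + j)) =o[l] fun _ => (1 : ℝ)) :
    (fun x => prodD (B x) (ν x) k - prodD (B' x) (ν x) k) =o[l] fun _ => (1 : ℝ) := by
  induction k with
  | zero => simpa [prodD] using tendsto_const_nhds
  | succ k ih =>
    have hk := k.lt_succ_self
    have hBk : (fun x => B x (ν x + k)) =O[l] fun _ => (1 : ℝ) := by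
      simpa using (hB' k hk).add (hB k hk).isBigO
    have ih' := ih (fun j hj => hB' j (hj.trans hk)) (fun j hj => hB j (hj.trans hk))
    have hP' := isBigO_prodD k (fun j hj => hB' j (hj.trans hk))
    have e : ∀ x, prodD (B x) (ν x) (k + 1) - prodD (B' x) (ν x) (k + 1) =
        B x (ν x + k) * (prodD (B x) (ν x) k - prodD (B' x) (ν x) k) +
          (B x (ν x + k) - B' x (ν x + k)) * prodD (B' x) (ν x) k := fun x => by
      simp only [prodD, mul_sub, sub_mul, mul_def]; abel
    simpa [e] using (hBk.mul_isLittleO ih').add ((hB k hk).mul_isBigO hP')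

end Products

section TransferMatrices

lemma transfer_eq_calB (a a' b : ℕ → H →L[ℂ] H) (z : ℂ) :
    transfer a a' b z =
      calB a' (fun n => a' n ∘L b n) (fun n => a' n ∘L adjoint (a (n - 1))) z := by
  funext n
  simp only [transfer, calB, comp_sub, comp_smul]
  rfl

lemma calB_sub_calB (T Q R T' Q' R' : ℕ → H →L[ℂ] H) (z : ℂ) (i : ℕ) :
    calB T Q R z i - calB T' Q' R' z i =
      blk 0 0 (-(R i - R' i)) (z • (T i - T' i) - (Q i - Q' i)) := by
  rw [calB, calB, blk_sub, sub_self, sub_self, smul_sub]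
  congr 1 <;> abel

variable {α : Type*} {l : Filter α} {ζ : α → ℂ} {ν : α → ℕ} {T Q R T' Q' R' : ℕ → H →L[ℂ] H}

lemma isBigO_calB (hζ : ζ =O[l] fun _ => (1 : ℝ))
    (hT : (fun x => T (ν x)) =O[l] fun _ => (1 : ℝ))
    (hQ : (fun x => Q (ν x)) =O[l] fun _ => (1 : ℝ))
    (hR : (fun x => R (ν x)) =O[l] fun _ => (1 : ℝ)) :
    (fun x => calB T Q R (ζ x) (ν x)) =O[l] fun _ => (1 : ℝ) :=
  isBigO_blk (isBigO_const_one _ _ _) (isBigO_const_one _ _ _) hR.neg_left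
    (((hζ.smul hT).congr_right fun _ => by simp).sub hQ)

lemma isLittleO_calB_sub_calB (hζ : ζ =O[l] fun _ => (1 : ℝ))
    (hT : (fun x => T (ν x) - T' (ν x)) =o[l] fun _ => (1 : ℝ))
    (hQ : (fun x => Q (ν x) - Q' (ν x)) =o[l] fun _ => (1 : ℝ))
    (hR : (fun x => R (ν x) - R' (ν x)) =o[l] fun _ => (1 : ℝ)) :
    (fun x => calB T Q R (ζ x) (ν x) - calB T' Q' R' (ζ x) (ν x)) =o[l] fun _ => (1 : ℝ) := by
  simp only [calB_sub_calB]
  exact isLittleO_blk (isLittleO_zero _ _) (isLittleO_zero _ _) hR.neg_left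
    (((hζ.smul_isLittleO hT).congr_right fun _ => by simp).sub hQ)

end TransferMatrices

section Normalization

variable {α : Type*} {l : Filter α} {g : α → ℝ} {A C : α → H →L[ℂ] H}

lemma adjoint_real_smul (r : ℝ) (A : H →L[ℂ] H) : adjoint (r • A) = r • adjoint A := by
  rw [← Complex.coe_smul, ← Complex.coe_smul, LinearIsometryEquiv.map_smulₛₗ, Complex.conj_ofReal]

lemma norm_inv_norm_smul_le {E : Type*} [SeminormedAddCommGroup E] [NormedSpace ℝ E] (x : E) :
    ‖(‖x‖⁻¹ : ℝ) • x‖ ≤ 1 := by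
  rw [norm_smul, norm_inv, norm_norm]
  exact inv_mul_le_one_of_le₀ le_rfl (norm_nonneg x)

lemma isBigO_blk_diag_adjoint (h : A =O[l] g) :
    (fun x => blk (A x) 0 0 (adjoint (A x))) =O[l] g :=
  isBigO_blk h (isBigO_zero _ _) (isBigO_zero _ _)
    (isBigO_norm_left.1 (by simpa only [LinearIsometryEquiv.norm_map] using h.norm_left))

lemma isLittleO_blk_diag_adjoint (h : A =o[l] g) :
    (fun x => blk (A x) 0 0 (adjoint (A x))) =o[l] g :=
  isLittleO_blk h (isLittleO_zero _ _) (isLittleO_zero _ _)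
    (isLittleO_norm_left.1 (by simpa only [LinearIsometryEquiv.norm_map] using h.norm_left))

lemma isBigO_blk_normalized :
    (fun x => blk ((‖A x‖⁻¹ : ℝ) • A x) 0 0 ((‖A x‖⁻¹ : ℝ) • adjoint (A x))) =O[l]
      fun _ => (1 : ℝ) := by
  simp only [← adjoint_real_smul]
  exact isBigO_blk_diag_adjoint
    (IsBigO.of_bound 1 (Eventually.of_forall fun x => by simpa using norm_inv_norm_smul_le (A x)))

lemma isLittleO_blk_normalized_sub (h : (fun x => (‖A x‖⁻¹ : ℝ) • A x - C x) =o[l] g) :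
    (fun x => blk ((‖A x‖⁻¹ : ℝ) • A x) 0 0 ((‖A x‖⁻¹ : ℝ) • adjoint (A x)) -
      blk (C x) 0 0 (adjoint (C x))) =o[l] g := by
  simp only [← adjoint_real_smul, blk_sub, ← map_sub, sub_zero]
  exact isLittleO_blk_diag_adjoint h

end Normalization

section TransferProducts

variable {α : Type*} {l : Filter α} {ζ : α → ℂ} {ν : α → ℕ} {a a' b T Q R : ℕ → H →L[ℂ] H}

lemma isBigO_prodD_transfer (hζ : ζ =O[l] fun _ => (1 : ℝ)) (n k : ℕ) :
    (fun x => prodD (transfer a a' b (ζ x)) n k) =O[l] fun _ => (1 : ℝ) := by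
  simp only [transfer_eq_calB]
  exact isBigO_prodD (ν := fun _ => n) k fun _ _ => isBigO_calB hζ
    (isBigO_const_one _ _ _) (isBigO_const_one _ _ _) (isBigO_const_one _ _ _)

lemma isBigO_prodD_calB (hζ : ζ =O[l] fun _ => (1 : ℝ)) (hT : IsBounded (range T))
    (hQ : IsBounded (range Q)) (hR : IsBounded (range R)) (k : ℕ) :
    (fun x => prodD (calB T Q R (ζ x)) (ν x) k) =O[l] fun _ => (1 : ℝ) :=
  isBigO_prodD k fun _ _ => isBigO_calB hζ (isBigO_one_comp_of_isBounded_range hT _)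
    (isBigO_one_comp_of_isBounded_range hQ _) (isBigO_one_comp_of_isBounded_range hR _)

lemma isLittleO_prodD_transfer_sub_calB (hζ : ζ =O[l] fun _ => (1 : ℝ))
    (hν : Tendsto ν l atTop) (hTb : IsBounded (range T)) (hQb : IsBounded (range Q))
    (hRb : IsBounded (range R)) (hT : Tendsto (fun n => ‖a' n - T n‖) atTop (𝓝 0))
    (hQ : Tendsto (fun n => ‖a' n ∘L b n - Q n‖) atTop (𝓝 0))
    (hR : Tendsto (fun n => ‖a' n ∘L adjoint (a (n - 1)) - R n‖) atTop (𝓝 0)) (k : ℕ) :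
    (fun x => prodD (transfer a a' b (ζ x)) (ν x) k - prodD (calB T Q R (ζ x)) (ν x) k) =o[l]
      fun _ => (1 : ℝ) := by
  simp only [transfer_eq_calB]
  refine isLittleO_prodD_sub k (fun _ _ => isBigO_calB hζ
    (isBigO_one_comp_of_isBounded_range hTb _) (isBigO_one_comp_of_isBounded_range hQb _)
    (isBigO_one_comp_of_isBounded_range hRb _)) fun j _ => ?_
  have hνj : Tendsto (fun x => ν x + j) l atTop := (tendsto_add_atTop_nat j).comp hν
  exact isLittleO_calB_sub_calB hζ (isLittleO_one_comp_of_tendsto_norm hT hνj)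
    (isLittleO_one_comp_of_tendsto_norm hQ hνj) (isLittleO_one_comp_of_tendsto_norm hR hνj)

end TransferProducts

theorem statement18_general (a b a' : ℕ → H →L[ℂ] H)
    (N : ℕ) (hN : 1 ≤ N)
    (T Q R C : ℕ → H →L[ℂ] H)
    (hTper : ∀ n, T (n + N) = T n) (hQper : ∀ n, Q (n + N) = Q n)
    (hRper : ∀ n, R (n + N) = R n)
    (hT : Tendsto (fun n => ‖a' n - T n‖) atTop (nhds 0))
    (hQ : Tendsto (fun n => ‖a' n ∘L b n - Q n‖) atTop (nhds 0))
    (hR : Tendsto (fun n => ‖a' n ∘L adjoint (a (n - 1)) - R n‖) atTop (nhds 0))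
    (hC : Tendsto (fun n => ‖(‖a n‖⁻¹ : ℝ) • a n - C n‖) atTop (nhds 0)) :
    (∀ K : Set ℂ, IsCompact K → ∃ Cb : ℝ, ∀ n : ℕ, 1 ≤ n → ∀ z ∈ K,
      ‖prodD (transfer a a' b z) n N‖ ≤ Cb) ∧
    (∀ K : Set ℂ, IsCompact K → ∀ ε > (0 : ℝ), ∀ᶠ n : ℕ in atTop, ∀ z ∈ K,
      ‖blk ((‖a (n + N - 1)‖⁻¹ : ℝ) • a (n + N - 1)) 0 0
            ((‖a (n + N - 1)‖⁻¹ : ℝ) • adjoint (a (n + N - 1))) ∘L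
          blk 0 (-1) 1 0 ∘L prodD (transfer a a' b z) n N -
        blk (C (n + N - 1)) 0 0 (adjoint (C (n + N - 1))) ∘L
          blk 0 (-1) 1 0 ∘L prodD (calB T Q R z) n N‖ < ε) := by
  have hTb := (Function.Periodic.finite_range_nat hTper hN).isBounded
  have hQb := (Function.Periodic.finite_range_nat hQper hN).isBounded
  have hRb := (Function.Periodic.finite_range_nat hRper hN).isBounded
  have hζ (K : Set ℂ) (hK : IsCompact K) :
      (Prod.snd : ℕ × ℂ → ℂ) =O[atTop ×ˢ 𝓟 K] fun _ => (1 : ℝ) :=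
    (isBigO_id_principal hK.isBounded).comp_tendsto tendsto_snd
  have hY (K : Set ℂ) (hK : IsCompact K) :=
    isBigO_prodD_calB (ν := Prod.fst) (hζ K hK) hTb hQb hRb N
  have hXY (K : Set ℂ) (hK : IsCompact K) :=
    isLittleO_prodD_transfer_sub_calB (hζ K hK) tendsto_fst hTb hQb hRb hT hQ hR N
  refine ⟨fun K hK => ?_, fun K hK ε hε => ?_⟩
  · obtain ⟨c, hc⟩ := exists_bound_of_isBigO_atTop_prod_principal
      (f := fun n z => prodD (transfer a a' b z) n N)
      (by simpa using (hY K hK).add (hXY K hK).isBigO)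
      (fun n => isBigO_prodD_transfer (isBigO_id_principal hK.isBounded) n N)
    exact ⟨c, fun n _ z hz => hc n z hz⟩
  · have hμ : Tendsto (fun p : ℕ × ℂ => p.1 + N - 1) (atTop ×ˢ 𝓟 K) atTop :=
      tendsto_atTop_mono (fun p => by omega) tendsto_fst
    have h := isBigO_blk_normalized.mul_mul_sub_mul_mul (blk 0 (-1) 1 0)
      (isLittleO_blk_normalized_sub (isLittleO_one_comp_of_tendsto_norm hC hμ))
      (hY K hK) (hXY K hK)
    exact eventually_prod_principal_iff.1
      (NormedAddGroup.tendsto_nhds_zero.1 ((isLittleO_one_iff ℝ).1 h) ε hε)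

/-- Proposition `prop:5`. -/
theorem statement18 (a b a' : ℕ → H →L[ℂ] H)
    (hinv : ∀ n, Inverts (a n) (a' n)) (hb : ∀ n, IsSelfAdjoint (b n))
    (N : ℕ) (hN : 1 ≤ N)
    (T Q R C : ℕ → H →L[ℂ] H)
    (hTper : ∀ n, T (n + N) = T n) (hQper : ∀ n, Q (n + N) = Q n)
    (hRper : ∀ n, R (n + N) = R n) (hCper : ∀ n, C (n + N) = C n)
    (hRinv : ∀ n, ∃ R', Inverts (R n) R') (hCinv : ∀ n, ∃ C', Inverts (C n) C')
    (hT : Tendsto (fun n => ‖a' n - T n‖) atTop (nhds 0))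
    (hQ : Tendsto (fun n => ‖a' n ∘L b n - Q n‖) atTop (nhds 0))
    (hR : Tendsto (fun n => ‖a' n ∘L adjoint (a (n - 1)) - R n‖) atTop (nhds 0))
    (hC : Tendsto (fun n => ‖(‖a n‖⁻¹ : ℝ) • a n - C n‖) atTop (nhds 0)) :
    (∀ K : Set ℂ, IsCompact K → ∃ Cb : ℝ, ∀ n : ℕ, 1 ≤ n → ∀ z ∈ K,
      ‖prodD (transfer a a' b z) n N‖ ≤ Cb) ∧
    (∀ K : Set ℂ, IsCompact K → ∀ ε > (0 : ℝ), ∀ᶠ n : ℕ in atTop, ∀ z ∈ K,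
      ‖blk ((‖a (n + N - 1)‖⁻¹ : ℝ) • a (n + N - 1)) 0 0
            ((‖a (n + N - 1)‖⁻¹ : ℝ) • adjoint (a (n + N - 1))) ∘L
          blk 0 (-1) 1 0 ∘L prodD (transfer a a' b z) n N -
        blk (C (n + N - 1)) 0 0 (adjoint (C (n + N - 1))) ∘L
          blk 0 (-1) 1 0 ∘L prodD (calB T Q R z) n N‖ < ε) :=
  statement18_general a b a' N hN T Q R C hTper hQper hRper hT hQ hR hC
end
end
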